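/- Let k be an algebraically closed field, G a group, and N a normal subgroup of G such that G/N is commutative. Let (ρ_1, V_1) and (ρ_2, V_2) be simple k-linear representations of G (simple as k[G]-modules) such that the k-vector space Hom_{k[N]}(V_1, V_2) of N-equivariant k-linear maps is nonzero and finite-dimensional over k. Then there exists a group homomorphism χ : G → k^× trivial on N such that ρ_1 ≅ ρ_2 ⊗ χ, where ρ_2 ⊗ χ denotes the representation g ↦ χ(g)·ρ_2(g) on V_2. -/

import Mathlib

/-!
`G` acts on `Hom_{k[N]}(V₁, V₂)` by `g • φ = ρ₂ g ∘ φ ∘ ρ₁ g⁻¹`, and this action factors through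
the commutative group `G ⧸ N`. Commuting operators on a nonzero finite-dimensional space over an
algebraically closed field have a common eigenvector `φ`; its eigenvalues form a character `χ`,
and `φ` intertwines `ρ₁` with the twist of `ρ₂` by `χ⁻¹`. Twisting preserves irreducibility, so
Schur's lemma makes `φ` an isomorphism.
-/

/-- The `k`-subspace of `V₁ →ₗ[k] V₂` consisting of maps equivariant for the restrictions of
`ρ₁`, `ρ₂` to a subgroup `N`; this is the space `Hom_{k[N]}(V₁, V₂)`. -/
def equivariantHom {k G V₁ V₂ : Type} [Field k] [Group G]
    [AddCommGroup V₁] [Module k V₁] [AddCommGroup V₂] [Module k V₂]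
    (N : Subgroup G) (ρ₁ : Representation k G V₁) (ρ₂ : Representation k G V₂) :
    Submodule k (V₁ →ₗ[k] V₂) where
  carrier := {f | ∀ g ∈ N, ∀ v : V₁, f (ρ₁ g v) = ρ₂ g (f v)}
  add_mem' := by
    intro f f' hf hf' g hg v
    simp [hf g hg v, hf' g hg v]
  zero_mem' := by
    intro g hg v
    simp
  smul_mem' := by
    intro c f hf g hg v
    simp [hf g hg v]

open Function Set

namespace Module.End

variable {k W ι : Type*} [Field k] [IsAlgClosed k] [AddCommGroup W] [Module k W]
  [FiniteDimensional k W] [Nontrivial W]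

/-- A minimal nonzero subspace stable under all `T i` lies in every eigenspace of each `T i` that
it meets: that intersection is again stable because the `T j` commute with `T i`. -/
theorem exists_ne_zero_forall_eigenvector_of_commute (T : ι → End k W)
    (hT : ∀ i j, Commute (T i) (T j)) : ∃ w ≠ 0, ∀ i, ∃ μ : k, T i w = μ • w := by
  let stable : Set (Submodule k W) := {p | p ≠ ⊥ ∧ ∀ i, MapsTo (T i) p p}
  obtain ⟨p, ⟨hp0, hpT⟩, hmin⟩ :=
    wellFounded_lt.has_min stable ⟨⊤, top_ne_bot, fun _ _ _ ↦ trivial⟩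
  have hp_le : ∀ i, ∃ μ : k, p ≤ (T i).eigenspace μ := by
    intro i
    have : Nontrivial p := Submodule.nontrivial_iff_ne_bot.mpr hp0
    obtain ⟨μ, hμ⟩ := exists_eigenvalue ((T i).restrict (hpT i))
    obtain ⟨v, hv⟩ := hμ.exists_hasEigenvector
    have hv_mem : (v : W) ∈ p ⊓ (T i).eigenspace μ :=
      ⟨v.2, mem_eigenspace_iff.mpr congr(Subtype.val $(hv.apply_eq_smul))⟩
    have h_stable : p ⊓ (T i).eigenspace μ ∈ stable :=
      ⟨fun h ↦ hv.2 (by simpa [h] using hv_mem),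
        fun j _ hx ↦ ⟨hpT j hx.1, mapsTo_genEigenspace_of_comm (hT i j) μ 1 hx.2⟩⟩
    exact ⟨μ, inf_eq_left.mp (inf_le_left.eq_of_not_lt (hmin _ h_stable))⟩
  obtain ⟨w, hw, hw0⟩ := Submodule.exists_mem_ne_zero_of_ne_bot hp0
  exact ⟨w, hw0, fun i ↦ (hp_le i).imp fun μ hμ ↦ mem_eigenspace_iff.mp (hμ hw)⟩

end Module.End

namespace Representation

section Character

variable {k H W : Type*} [Field k] [IsAlgClosed k] [Group H] [AddCommGroup W] [Module k W]
  [FiniteDimensional k W] [Nontrivial W]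

theorem exists_ne_zero_forall_apply_eq_smul_of_commute (σ : Representation k H W)
    (hσ : ∀ a b, Commute (σ a) (σ b)) :
    ∃ (χ : H →* kˣ) (w : W), w ≠ 0 ∧ ∀ h, σ h w = (χ h : k) • w := by
  obtain ⟨w, hw0, hμ⟩ := Module.End.exists_ne_zero_forall_eigenvector_of_commute σ hσ
  choose μ hμ using hμ
  have hμ_inj : Injective (· • w : k → W) := smul_left_injective k hw0
  let χ : H →* k :=
    { toFun := μ
      map_one' := hμ_inj (by simp [← hμ])
      map_mul' := fun a b ↦ hμ_inj <| by
        dsimp only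
        rw [← hμ, map_mul, Module.End.mul_apply, hμ, map_smul, hμ, smul_smul, mul_comm] }
  exact ⟨χ.toHomUnits, w, hw0, hμ⟩

end Character

section Twist

variable {k G V : Type*} [Field k] [Group G] [AddCommGroup V] [Module k V]

def twist (ρ : Representation k G V) (χ : G →* kˣ) : Representation k G V where
  toFun g := (χ g : k) • ρ g
  map_one' := by simp
  map_mul' g h := by simp only [map_mul, Units.val_mul, smul_mul_smul_comm]

@[simp]
theorem twist_apply (ρ : Representation k G V) (χ : G →* kˣ) (g : G) (v : V) :
    ρ.twist χ g v = (χ g : k) • ρ g v :=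
  rfl

def subrepresentationTwistOrderIso (ρ : Representation k G V) (χ : G →* kˣ) :
    Subrepresentation ρ ≃o Subrepresentation (ρ.twist χ) where
  toFun p := ⟨p.toSubmodule, fun g _ hv ↦
    (Submodule.smul_mem_iff' p.toSubmodule (χ g)).mpr (p.apply_mem_toSubmodule g hv)⟩
  invFun p := ⟨p.toSubmodule, fun g _ hv ↦
    (Submodule.smul_mem_iff' p.toSubmodule (χ g)).mp (p.apply_mem_toSubmodule g hv)⟩
  left_inv _ := rfl
  right_inv _ := rfl
  map_rel_iff' := Iff.rfl

instance isIrreducible_twist (ρ : Representation k G V) [IsIrreducible ρ] (χ : G →* kˣ) :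
    IsIrreducible (ρ.twist χ) :=
  (subrepresentationTwistOrderIso ρ χ).symm.isSimpleOrder

end Twist

theorem isIntertwining_twist_inv_of_linHom_apply_eq_smul {k G V W : Type*} [Field k] [Group G]
    [AddCommGroup V] [Module k V] [AddCommGroup W] [Module k W]
    {ρ : Representation k G V} {σ : Representation k G W} {χ : G →* kˣ} {φ : V →ₗ[k] W}
    (hφ : ∀ g, linHom ρ σ g φ = (χ g : k) • φ) (g : G) (v : V) :
    φ (ρ g v) = σ.twist χ⁻¹ g (φ v) := by
  have h := congr($(hφ g) (ρ g v))
  simp only [linHom_apply, LinearMap.comp_apply, ← Module.End.mul_apply, ← map_mul,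
    inv_mul_cancel, map_one, Module.End.one_apply, LinearMap.smul_apply] at h
  rw [twist_apply, h, ← Units.smul_def, ← Units.smul_def, MonoidHom.inv_apply, inv_smul_smul]

end Representation

open Representation

theorem equivariantHom_eq_invariants {k G V₁ V₂ : Type} [Field k] [Group G]
    [AddCommGroup V₁] [Module k V₁] [AddCommGroup V₂] [Module k V₂]
    (N : Subgroup G) (ρ₁ : Representation k G V₁) (ρ₂ : Representation k G V₂) :
    equivariantHom N ρ₁ ρ₂ = invariants ((linHom ρ₁ ρ₂).comp N.subtype) := by
  ext f
  change _ ↔ ∀ n : N, (ρ₂.comp N.subtype) n ∘ₗ f ∘ₗ (ρ₁.comp N.subtype) n⁻¹ = f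
  rw [mem_linHom_invariants_iff_isIntertwining, isIntertwiningMap_iff]
  exact ⟨fun hf n ↦ hf n n.2, fun hf n hn ↦ hf ⟨n, hn⟩⟩

theorem twist_by_character_of_nonzero_finite_dimensional_equivariant_hom
    (k : Type) [Field k] [IsAlgClosed k]
    (G : Type) [Group G] (N : Subgroup G) [N.Normal]
    (hcomm : ∀ a b : G ⧸ N, a * b = b * a)
    (V₁ V₂ : Type) [AddCommGroup V₁] [Module k V₁] [AddCommGroup V₂] [Module k V₂]
    (ρ₁ : Representation k G V₁) (ρ₂ : Representation k G V₂)
    (h₁ : IsSimpleModule (MonoidAlgebra k G) ρ₁.asModule)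
    (h₂ : IsSimpleModule (MonoidAlgebra k G) ρ₂.asModule)
    (hne : equivariantHom N ρ₁ ρ₂ ≠ ⊥)
    (hfd : FiniteDimensional k (equivariantHom N ρ₁ ρ₂)) :
    ∃ χ : G →* kˣ, (∀ n ∈ N, χ n = 1) ∧
      ∃ e : V₁ ≃ₗ[k] V₂, ∀ (g : G) (v : V₁), e (ρ₁ g v) = (χ g : k) • ρ₂ g (e v) := by
  rw [equivariantHom_eq_invariants] at hne hfd
  have : Nontrivial (invariants ((linHom ρ₁ ρ₂).comp N.subtype)) :=
    Submodule.nontrivial_iff_ne_bot.mpr hne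
  obtain ⟨χ, φ, hφ0, hφ⟩ :=
    ((linHom ρ₁ ρ₂).quotientToInvariants N).exists_ne_zero_forall_apply_eq_smul_of_commute
      fun a b ↦ by simp only [Commute, SemiconjBy, ← map_mul, hcomm a b]
  have hφ_linHom (g : G) : linHom ρ₁ ρ₂ g φ = (χ g : k) • (φ : V₁ →ₗ[k] V₂) :=
    congr(Subtype.val $(hφ g))
  have := (irreducible_iff_isSimpleModule_asModule ρ₁).mpr h₁
  have := (irreducible_iff_isSimpleModule_asModule ρ₂).mpr h₂
  set ψ : G →* kˣ := (χ.comp (QuotientGroup.mk' N))⁻¹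
  let f : IntertwiningMap ρ₁ (ρ₂.twist ψ) :=
    (φ : V₁ →ₗ[k] V₂).intertwiningMap_of_isIntertwiningMap _ _
      (isIntertwining_twist_inv_of_linHom_apply_eq_smul hφ_linHom)
  have hf : Bijective f := (IsIrreducible.bijective_or_eq_zero f).resolve_right fun h ↦
    hφ0 (Subtype.ext congr(IntertwiningMap.toLinearMap $h))
  refine ⟨ψ, fun n hn ↦ ?_, .ofBijective f.toLinearMap hf, f.isIntertwining⟩
  simp [ψ, (QuotientGroup.eq_one_iff n).mpr hn]
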